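/- arXiv:1102.0958 — 4 statements merged into one kernel-verified Lean document; each statement's English description precedes it below -/
import Mathlib

section
/- Let x̄ ∈ F(0) for the feasible solution map F of the parametric convex inequality system σ(p), with X an arbitrary Banach space. Then F is Lipschitz-like around (0, x̄) if and only if the coderivative condition D*F(0, x̄)(0) = {0} holds, i.e., the only p* ∈ l_∞(T)* satisfying ⟨p*, p⟩ ≤ 0 for all p ∈ dom F is p* = 0 in the sense that p* ∈ D*F(0, x̄)(0) implies p* = 0. -/
open Filter
open scoped ENNReal

noncomputable section

/-- The Banach space `l_∞(T)` of bounded real functions on `T` with sup norm. -/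
abbrev Linf (T : Type*) : Type _ := lp (fun _ : T => ℝ) ∞

/-- The Dirac evaluation functional `δ_t ∈ l_∞(T)*`. -/
def dirac (T : Type*) (t : T) : Linf T →L[ℝ] ℝ :=
  LinearMap.mkContinuous
    { toFun := fun p => p t
      map_add' := fun p q => by simp [lp.coeFn_add]
      map_smul' := fun c p => by simp [lp.coeFn_smul] }
    1 (fun p => by rw [one_mul]; exact lp.norm_apply_le_norm ENNReal.top_ne_zero p t)

variable {X : Type*} [NormedAddCommGroup X] [NormedSpace ℝ X]

/-- Fenchel conjugate of an extended-real-valued function. -/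
def conj (g : X → EReal) (u : X →L[ℝ] ℝ) : EReal :=
  ⨆ x : X, (u x : EReal) - g x

/-- `dom g* = {u* : g*(u*) < +∞}`. -/
def domConj (g : X → EReal) : Set (X →L[ℝ] ℝ) := {u | conj g u < ⊤}

/-- `gph g* = {(u*, g*(u*)) : u* ∈ dom g*}`. -/
def gphConj (g : X → EReal) : Set ((X →L[ℝ] ℝ) × ℝ) :=
  {q | conj g q.1 = (q.2 : EReal)}

/-- `epi g* = {(u*, γ) : g*(u*) ≤ γ}`. -/
def epiConj (g : X → EReal) : Set ((X →L[ℝ] ℝ) × ℝ) :=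
  {q | conj g q.1 ≤ (q.2 : EReal)}

/-- A proper extended-real-valued function: never `⊥`, not identically `⊤`. -/
def ErealProper (g : X → EReal) : Prop := (∀ x, g x ≠ ⊥) ∧ ∃ x, g x ≠ ⊤

/-- Convexity of an extended-real-valued function. -/
def ErealConvexOn (g : X → EReal) : Prop :=
  ∀ x y : X, ∀ a b : ℝ, 0 ≤ a → 0 ≤ b → a + b = 1 →
    g (a • x + b • y) ≤ (a : EReal) * g x + (b : EReal) * g y

variable {T : Type*}

/-- The feasible solution map `F(p) = {x : f_t(x) ≤ p_t ∀ t}`. -/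
def feas (f : T → X → EReal) (p : Linf T) : Set X :=
  {x | ∀ t, f t x ≤ ((p t : ℝ) : EReal)}

/-- The graph of the feasible solution map. -/
def feasGraph (f : T → X → EReal) : Set (Linf T × X) :=
  {q | q.2 ∈ feas f q.1}

/-- Lipschitz-like (Aubin) property of a set-valued map (given by its graph `G`)
around `(z̄, ȳ) ∈ G` with modulus `ℓ`. -/
def LipLike {Z Y : Type*} [NormedAddCommGroup Z] [NormedAddCommGroup Y]
    (G : Set (Z × Y)) (zb : Z) (yb : Y) (ℓ : ℝ) : Prop :=
  ∃ U ∈ nhds zb, ∃ V ∈ nhds yb, ∀ z ∈ U, ∀ u ∈ U, ∀ y ∈ V,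
    (z, y) ∈ G → ∃ y', (u, y') ∈ G ∧ ‖y - y'‖ ≤ ℓ * ‖z - u‖

/-- The exact Lipschitzian bound `lip G(z̄, ȳ)` (value `∞` if the map is not
Lipschitz-like around `(z̄, ȳ)`). -/
def lipBound {Z Y : Type*} [NormedAddCommGroup Z] [NormedAddCommGroup Y]
    (G : Set (Z × Y)) (zb : Z) (yb : Y) : ℝ≥0∞ :=
  sInf {c : ℝ≥0∞ | ∃ ℓ : ℝ, 0 ≤ ℓ ∧ LipLike G zb yb ℓ ∧ c = ENNReal.ofReal ℓ}

/-- Coderivative of a convex-graph map `G` at `(0, ȳ)`: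
`z* ∈ D*G(0, ȳ)(y*)` iff `⟨z*, z⟩ − ⟨y*, y⟩ ≤ −⟨y*, ȳ⟩` for all `(z, y) ∈ G`. -/
def coderivMem {Z Y : Type*} [NormedAddCommGroup Z] [NormedSpace ℝ Z]
    [NormedAddCommGroup Y] [NormedSpace ℝ Y]
    (G : Set (Z × Y)) (yb : Y) (ys : Y →L[ℝ] ℝ) (zs : Z →L[ℝ] ℝ) : Prop :=
  ∀ q ∈ G, zs q.1 - ys q.2 ≤ - ys yb

/-- The coderivative norm `‖D*G(0, ȳ)‖ = sup{‖z*‖ : z* ∈ D*G(0, ȳ)(y*), ‖y*‖ ≤ 1}`. -/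
def coderivNorm {Z Y : Type*} [NormedAddCommGroup Z] [NormedSpace ℝ Z]
    [NormedAddCommGroup Y] [NormedSpace ℝ Y]
    (G : Set (Z × Y)) (yb : Y) : ℝ≥0∞ :=
  ⨆ zs ∈ {zs : Z →L[ℝ] ℝ | ∃ ys : Y →L[ℝ] ℝ, ‖ys‖ ≤ 1 ∧ coderivMem G yb ys zs},
    (‖zs‖₊ : ℝ≥0∞)

/-- Weak* closure of a subset of `X* × ℝ`. -/
def wclosure2 (S : Set ((X →L[ℝ] ℝ) × ℝ)) : Set ((X →L[ℝ] ℝ) × ℝ) :=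
  {q | ((StrongDual.toWeakDual q.1 : WeakDual ℝ X), q.2) ∈
    closure ((fun w : (X →L[ℝ] ℝ) × ℝ =>
      ((StrongDual.toWeakDual w.1 : WeakDual ℝ X), w.2)) '' S)}

/-- Weak* closure of a subset of `l_∞(T)* × X* × ℝ` (the dual of `l_∞(T) × X × ℝ`). -/
def wclosure3 (S : Set ((Linf T →L[ℝ] ℝ) × ((X →L[ℝ] ℝ) × ℝ))) :
    Set ((Linf T →L[ℝ] ℝ) × ((X →L[ℝ] ℝ) × ℝ)) :=
  {q | ((StrongDual.toWeakDual q.1 : WeakDual ℝ (Linf T)),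
        ((StrongDual.toWeakDual q.2.1 : WeakDual ℝ X), q.2.2)) ∈
    closure ((fun w : (Linf T →L[ℝ] ℝ) × ((X →L[ℝ] ℝ) × ℝ) =>
      ((StrongDual.toWeakDual w.1 : WeakDual ℝ (Linf T)),
        ((StrongDual.toWeakDual w.2.1 : WeakDual ℝ X), w.2.2))) '' S)}

/-- Convex conic hull. -/
def coneHull {V : Type*} [AddCommMonoid V] [Module ℝ V] (S : Set V) : Set V :=
  {x | ∃ r : ℝ, 0 ≤ r ∧ ∃ y ∈ convexHull ℝ S, x = r • y}

/-- `C(p) = co(⋃ₜ gph (f_t − p_t)*)`. -/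
def Cset (f : T → X → EReal) (p : Linf T) : Set ((X →L[ℝ] ℝ) × ℝ) :=
  convexHull ℝ (⋃ t : T, gphConj (fun x => f t x - ((p t : ℝ) : EReal)))

/-- `H(p) = co(⋃ₜ epi (f_t − p_t)*)`. -/
def Hset (f : T → X → EReal) (p : Linf T) : Set ((X →L[ℝ] ℝ) × ℝ) :=
  convexHull ℝ (⋃ t : T, epiConj (fun x => f t x - ((p t : ℝ) : EReal)))

/-- Strong Slater condition for `σ(p)`. -/
def SSC (f : T → X → EReal) (p : Linf T) : Prop :=
  ∃ xh : X, (⨆ t : T, (f t xh - ((p t : ℝ) : EReal))) < 0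

/-- `x̂` is a strong Slater point for `σ(0)`. -/
def StrongSlaterPt (f : T → X → EReal) (xh : X) : Prop :=
  (⨆ t : T, f t xh) < 0


variable {X : Type*} [NormedAddCommGroup X] [NormedSpace ℝ X] {T : Type*}

/-- The index set `T̃ = {(t, u*) : u* ∈ dom f_t*}` of the linearized system. -/
def Ttilde (f : T → X → EReal) : Type _ :=
  {s : T × (X →L[ℝ] ℝ) // s.2 ∈ domConj (f s.1)}

/-- The linearized feasible solution map `F̃(ρ)`. -/
def feasTilde (f : T → X → EReal) (ρ : Linf (Ttilde f)) : Set X :=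
  {x | ∀ s : Ttilde f, ((s.1.2 x : ℝ) : EReal) - conj (f s.1.1) s.1.2 ≤ ((ρ s : ℝ) : EReal)}

/-- The embedding `p ↦ ρ_p`, `ρ_p(t, u*) = p_t`. -/
def rhoP (f : T → X → EReal) (p : Linf T) : Linf (Ttilde f) :=
  ⟨fun s => p s.1.1, memℓp_infty
    ⟨‖p‖, by rintro r ⟨s, rfl⟩; exact lp.norm_apply_le_norm ENNReal.top_ne_zero p s.1.1⟩⟩

/-- The subdifferential of convex analysis of `g` at `x`. -/
def subdiff (g : X → EReal) (x : X) : Set (X →L[ℝ] ℝ) :=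
  {u | ∀ y, ((u y - u x : ℝ) : EReal) ≤ g y - g x}

end

open Metric

/-! The domain `D = {p : F(p) ≠ ∅}` of the feasible solution map is convex, and `p ↦ F(p)` is
monotone, so `D` has nonempty interior as soon as `F(0) ≠ ∅`. Both conditions of the theorem are
equivalent to `0 ∈ int D`. For the coderivative condition this is the supporting hyperplane
theorem, since `p* ∈ D*F(0, x̄)(0)` means exactly that `p* ≤ 0` on `D`. For the Lipschitz-like
property, `0 ∈ int D` yields a strong Slater point `x̂` (`f_t(x̂) ≤ -ε` for all `t`), and moving a
point of `F(p)` towards `x̂` by the fraction `2‖p - u‖ / ε` lands in `F(u)`. -/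

section SupportingHyperplane

variable {E : Type*} [NormedAddCommGroup E] [NormedSpace ℝ E]

theorem Convex.mem_interior_iff_forall_le_imp_eq_zero {s : Set E} (hs : Convex ℝ s)
    (hint : (interior s).Nonempty) {x : E} :
    x ∈ interior s ↔ ∀ φ : E →L[ℝ] ℝ, (∀ y ∈ s, φ y ≤ φ x) → φ = 0 := by
  constructor
  · intro hx φ hφ
    have hmax : IsLocalMax φ x :=
      Filter.eventually_of_mem (mem_interior_iff_mem_nhds.1 hx) hφ
    exact hmax.hasFDerivAt_eq_zero φ.hasFDerivAt
  · intro h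
    by_contra hx
    obtain ⟨φ, u, hφ0, hφs, hφx⟩ := geometric_hahn_banach_of_nonempty_interior hs
      (convex_singleton x) (Set.disjoint_singleton_right.2 hx) hint (Set.singleton_nonempty x)
    exact hφ0 (h φ fun y hy => (hφs y hy).trans (hφx x rfl))

end SupportingHyperplane

section SetValued

variable {Z Y : Type*} [NormedAddCommGroup Z] [NormedAddCommGroup Y]

theorem LipLike.mem_interior_fst_image {G : Set (Z × Y)} {z : Z} {y : Y} {ℓ : ℝ}
    (h : LipLike G z y ℓ) (hzy : (z, y) ∈ G) : z ∈ interior (Prod.fst '' G) := by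
  obtain ⟨U, hU, V, hV, hlip⟩ := h
  refine mem_interior_iff_mem_nhds.2 (Filter.mem_of_superset hU fun u hu => ?_)
  obtain ⟨y', hy', -⟩ := hlip z (mem_of_mem_nhds hU) u hu y (mem_of_mem_nhds hV) hzy
  exact ⟨(u, y'), hy', rfl⟩

theorem coderivMem_zero_iff [NormedSpace ℝ Z] [NormedSpace ℝ Y] {G : Set (Z × Y)} {y : Y}
    {φ : Z →L[ℝ] ℝ} : coderivMem G y 0 φ ↔ ∀ z ∈ Prod.fst '' G, φ z ≤ 0 := by
  simp [coderivMem]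

end SetValued

namespace Linf

variable {T : Type*}

noncomputable def const (T : Type*) (c : ℝ) : Linf T :=
  ⟨fun _ => c, memℓp_infty ⟨‖c‖, by rintro r ⟨t, rfl⟩; exact le_rfl⟩⟩

@[simp]
theorem const_apply (c : ℝ) (t : T) : const T c t = c := rfl

theorem const_zero : const T 0 = 0 := rfl

theorem norm_const_le (c : ℝ) : ‖const T c‖ ≤ |c| :=
  lp.norm_le_of_forall_le (abs_nonneg c) fun _ => le_of_eq (Real.norm_eq_abs c)

theorem sub_le_apply_of_norm_sub_le {p q : Linf T} {ε : ℝ} (h : ‖q - p‖ ≤ ε) (t : T) :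
    p t - ε ≤ q t := by
  have := (lp.norm_apply_le_norm ENNReal.top_ne_zero (q - p) t).trans h
  rw [lp.coeFn_sub, Pi.sub_apply, Real.norm_eq_abs] at this
  linarith [neg_abs_le (q t - p t)]

end Linf

section Feasibility

variable {X : Type*} {T : Type*}

theorem feas_mono {f : T → X → EReal} {p q : Linf T} (hpq : ∀ t, p t ≤ q t) :
    feas f p ⊆ feas f q :=
  fun _ hx t => (hx t).trans (EReal.coe_le_coe_iff.2 (hpq t))

theorem closedBall_subset_fst_image_feasGraph {f : T → X → EReal} {x : X} {c ε : ℝ}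
    (hx : x ∈ feas f (Linf.const T (c - ε))) :
    closedBall (Linf.const T c) ε ⊆ Prod.fst '' feasGraph f := fun q hq =>
  ⟨(q, x), feas_mono (Linf.sub_le_apply_of_norm_sub_le (mem_closedBall_iff_norm.1 hq)) hx, rfl⟩

theorem exists_slater_of_zero_mem_interior {f : T → X → EReal}
    (h : (0 : Linf T) ∈ interior (Prod.fst '' feasGraph f)) :
    ∃ ε > 0, ∃ xh : X, xh ∈ feas f (Linf.const T (-ε)) := by
  obtain ⟨δ, hδ, hball⟩ := Metric.mem_nhds_iff.1 (mem_interior_iff_mem_nhds.1 h)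
  have hmem : Linf.const T (-(δ / 2)) ∈ ball 0 δ := by
    rw [mem_ball_zero_iff]
    calc ‖Linf.const T (-(δ / 2))‖ ≤ |-(δ / 2)| := Linf.norm_const_le _
      _ < δ := by rw [abs_neg, abs_of_pos (half_pos hδ)]; exact half_lt_self hδ
  obtain ⟨⟨_, xh⟩, hxh, rfl⟩ := hball hmem
  exact ⟨δ / 2, half_pos hδ, xh, hxh⟩

variable [NormedAddCommGroup X] [NormedSpace ℝ X]

theorem ErealConvexOn.apply_combo_le {g : X → EReal} (hg : ErealConvexOn g) {x y : X}
    {α β : ℝ} (hx : g x ≤ α) (hy : g y ≤ β) {a b : ℝ} (ha : 0 ≤ a) (hb : 0 ≤ b)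
    (hab : a + b = 1) : g (a • x + b • y) ≤ ((a * α + b * β : ℝ) : EReal) := by
  calc g (a • x + b • y) ≤ (a : EReal) * g x + (b : EReal) * g y := hg x y a b ha hb hab
    _ ≤ (a : EReal) * α + (b : EReal) * β := by gcongr
    _ = ((a * α + b * β : ℝ) : EReal) := by norm_cast

theorem convex_feasGraph {f : T → X → EReal} (hconv : ∀ t, ErealConvexOn (f t)) :
    Convex ℝ (feasGraph f) := by
  rintro ⟨p, x⟩ hx ⟨q, y⟩ hy a b ha hb hab t
  exact (hconv t).apply_combo_le (hx t) (hy t) ha hb hab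

theorem lipLike_feasGraph_of_slater {f : T → X → EReal} (hconv : ∀ t, ErealConvexOn (f t))
    {ε : ℝ} (hε : 0 < ε) {xh : X} (hxh : xh ∈ feas f (Linf.const T (-ε))) (xb : X) :
    LipLike (feasGraph f) 0 xb (2 * (‖xb - xh‖ + 1) / ε) := by
  refine ⟨closedBall 0 (ε / 2), closedBall_mem_nhds _ (half_pos hε), ball xb 1,
    ball_mem_nhds _ one_pos, fun p hp u hu x hx hpx => ?_⟩
  set lam := min (2 * ‖p - u‖ / ε) 1
  have hlam0 : 0 ≤ lam := le_min (by positivity) zero_le_one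
  have hlam1 : lam ≤ 1 := min_le_right _ _
  refine ⟨(1 - lam) • x + lam • xh, ?_, ?_⟩
  · have hcombo : (1 - lam) • x + lam • xh ∈ feas f ((1 - lam) • p + lam • Linf.const T (-ε)) :=
      convex_feasGraph hconv hpx (show (Linf.const T (-ε), xh) ∈ feasGraph f from hxh)
        (sub_nonneg.2 hlam1) hlam0 (sub_add_cancel 1 lam)
    refine feas_mono (fun t => ?_) hcombo
    have hp0 := Linf.sub_le_apply_of_norm_sub_le (p := 0) (by simpa using hp) t
    have hu0 := Linf.sub_le_apply_of_norm_sub_le (p := 0) (by simpa using hu) t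
    have hpu := Linf.sub_le_apply_of_norm_sub_le (q := u) (p := p) (norm_sub_rev u p).le t
    simp only [lp.coeFn_add, lp.coeFn_smul, Pi.add_apply, Pi.smul_apply, smul_eq_mul,
      Linf.const_apply, lp.coeFn_zero, Pi.zero_apply] at hp0 hu0 hpu ⊢
    obtain hlam | hlam : lam = 2 * ‖p - u‖ / ε ∨ lam = 1 := by
      rcases min_cases (2 * ‖p - u‖ / ε) 1 with ⟨h, -⟩ | ⟨h, -⟩
      exacts [.inl h, .inr h]
    · have hlε : lam * ε = 2 * ‖p - u‖ := by rw [hlam]; field_simp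
      nlinarith
    · rw [hlam]; linarith
  · have hxxh : ‖x - xh‖ ≤ ‖xb - xh‖ + 1 := by
      calc ‖x - xh‖ ≤ ‖x - xb‖ + ‖xb - xh‖ := norm_sub_le_norm_sub_add_norm_sub _ _ _
        _ ≤ ‖xb - xh‖ + 1 := by linarith [mem_ball_iff_norm.1 hx]
    calc ‖x - ((1 - lam) • x + lam • xh)‖ = lam * ‖x - xh‖ := by
          rw [show x - ((1 - lam) • x + lam • xh) = lam • (x - xh) by module, norm_smul,
            Real.norm_of_nonneg hlam0]
      _ ≤ 2 * ‖p - u‖ / ε * (‖xb - xh‖ + 1) :=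
          mul_le_mul (min_le_left _ _) hxxh (norm_nonneg _) (by positivity)
      _ = 2 * (‖xb - xh‖ + 1) / ε * ‖p - u‖ := by ring

end Feasibility

theorem stmt_0_general {T : Type*}
    {X : Type*} [NormedAddCommGroup X] [NormedSpace ℝ X]
    (f : T → X → EReal)
    (hconv : ∀ t, ErealConvexOn (f t))
    (xb : X) (hxb : xb ∈ feas f 0) :
    (∃ ℓ : ℝ, 0 ≤ ℓ ∧ LipLike (feasGraph f) 0 xb ℓ) ↔
      (∀ ps : Linf T →L[ℝ] ℝ, coderivMem (feasGraph f) xb 0 ps → ps = 0) := by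
  have hdom_convex : Convex ℝ (Prod.fst '' feasGraph f) :=
    (convex_feasGraph hconv).linear_image (LinearMap.fst ℝ _ _)
  have hdom_interior : (interior (Prod.fst '' feasGraph f)).Nonempty :=
    ⟨Linf.const T 1, interior_mono (closedBall_subset_fst_image_feasGraph (c := 1) (ε := 1)
      (by rwa [sub_self, Linf.const_zero]))
      (mem_interior_iff_mem_nhds.2 (closedBall_mem_nhds _ one_pos))⟩
  have hcod : (∀ ps : Linf T →L[ℝ] ℝ, coderivMem (feasGraph f) xb 0 ps → ps = 0) ↔
      (0 : Linf T) ∈ interior (Prod.fst '' feasGraph f) := by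
    simp only [hdom_convex.mem_interior_iff_forall_le_imp_eq_zero hdom_interior, coderivMem_zero_iff, map_zero]
  rw [hcod]
  constructor
  · rintro ⟨ℓ, -, hlip⟩
    exact hlip.mem_interior_fst_image hxb
  · intro h
    obtain ⟨ε, hε, xh, hxh⟩ := exists_slater_of_zero_mem_interior h
    exact ⟨_, by positivity, lipLike_feasGraph_of_slater hconv hε hxh xb⟩

theorem stmt_0 {T : Type*} [Nonempty T]
    {X : Type*} [NormedAddCommGroup X] [NormedSpace ℝ X] [CompleteSpace X]
    (f : T → X → EReal)
    (hproper : ∀ t, ErealProper (f t))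
    (hlsc : ∀ t, LowerSemicontinuous (f t))
    (hconv : ∀ t, ErealConvexOn (f t))
    (xb : X) (hxb : xb ∈ feas f 0) :
    (∃ ℓ : ℝ, 0 ≤ ℓ ∧ LipLike (feasGraph f) 0 xb ℓ) ↔
      (∀ ps : Linf T →L[ℝ] ℝ, coderivMem (feasGraph f) xb 0 ps → ps = 0) :=
  stmt_0_general f hconv xb hxb
end

section
/- Let σ(p) = {⟨a_t*, x⟩ ≤ b_t + p_t, t ∈ T} be a parametric linear inequality system in a Banach space X, and assume the coefficient set {a_t* : t ∈ T} is bounded in X*. Then for every x̄ ∈ F(0): { (u*, α) ∈ cl* C(0) : α = ⟨u*, x̄⟩ } = ⋂_{ε>0} cl* co{ (a_t*, b_t) : t ∈ T_ε(x̄) }, where T_ε(x̄) = { t ∈ T : ⟨a_t*, x̄⟩ ≥ b_t − ε } is the set of ε-active indices. -/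
open Filter
open scoped ENNReal

/-!
The inclusion `⊇` holds because every `ε`-active generator has slack `b t - ⟨a t, x̄⟩ ∈ [0, ε]`,
and this slack is weak*-continuous.

For `⊆`, the key estimate is that a point `w ∈ C(0)` of small slack `s` lies within norm distance
`K s` of `co{(a t, b t) : t ∈ T_ε(x̄)}`, where `K` depends only on `ε`, `‖x̄‖` and a bound `M` for
the `a t`. The set of points satisfying such an estimate is convex, so it suffices to check it on
generators; an inactive generator is compared with one fixed active generator, and the boundedness
of `{a t}` makes their distance linear in the slack. Along a net in `C(0)` converging weak* to a
point of zero slack, the slacks tend to `0`, hence the norm-close points of the active hull converge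
weak* to the same limit.
-/

section WeakStarClosure

variable {X : Type*} [NormedAddCommGroup X] [NormedSpace ℝ X]

noncomputable def toWeakStar (w : (X →L[ℝ] ℝ) × ℝ) : WeakDual ℝ X × ℝ :=
  (StrongDual.toWeakDual w.1, w.2)

theorem mem_wclosure2_iff {S : Set ((X →L[ℝ] ℝ) × ℝ)} {q : (X →L[ℝ] ℝ) × ℝ} :
    q ∈ wclosure2 S ↔ toWeakStar q ∈ closure (toWeakStar '' S) :=
  Iff.rfl

theorem toWeakStar_sub (v w : (X →L[ℝ] ℝ) × ℝ) :
    toWeakStar (v - w) = toWeakStar v - toWeakStar w :=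
  rfl

theorem toWeakStar_zero : toWeakStar (0 : (X →L[ℝ] ℝ) × ℝ) = 0 :=
  rfl

theorem continuous_toWeakStar : Continuous (toWeakStar (X := X)) := by
  unfold toWeakStar
  fun_prop

theorem wclosure2_mono {S S' : Set ((X →L[ℝ] ℝ) × ℝ)} (h : S ⊆ S') :
    wclosure2 S ⊆ wclosure2 S' :=
  fun _ hq => closure_mono (Set.image_mono (f := toWeakStar) h) hq

noncomputable def slack (x : X) : (X →L[ℝ] ℝ) × ℝ →ₗ[ℝ] ℝ :=
  LinearMap.snd ℝ _ _ - (ContinuousLinearMap.apply ℝ ℝ x).toLinearMap ∘ₗ LinearMap.fst ℝ _ _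

@[simp]
theorem slack_apply (x : X) (w : (X →L[ℝ] ℝ) × ℝ) : slack x w = w.2 - w.1 x :=
  rfl

theorem continuous_slack_weakStar (x : X) :
    Continuous fun z : WeakDual ℝ X × ℝ => z.2 - z.1 x :=
  continuous_snd.sub ((WeakDual.eval_continuous x).comp continuous_fst)

theorem wclosure2_subset_slack_preimage (x : X) {S : Set ((X →L[ℝ] ℝ) × ℝ)} {I : Set ℝ}
    (hI : IsClosed I) (hS : S ⊆ slack x ⁻¹' I) : wclosure2 S ⊆ slack x ⁻¹' I :=
  fun _ hq => closure_minimal (t := (fun z : WeakDual ℝ X × ℝ => z.2 - z.1 x) ⁻¹' I)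
    (Set.image_subset_iff.2 hS) (hI.preimage (continuous_slack_weakStar x)) hq

theorem mem_wclosure2_of_slack_approx {C D : Set ((X →L[ℝ] ℝ) × ℝ)} {q : (X →L[ℝ] ℝ) × ℝ}
    (x : X) {K ε : ℝ} (hε : 0 < ε) (hq : q ∈ wclosure2 C) (hq0 : slack x q = 0)
    (happrox : ∀ w ∈ C, slack x w < ε → ∃ w' ∈ D, ‖w - w'‖ ≤ K * slack x w) :
    q ∈ wclosure2 D := by
  rw [mem_wclosure2_iff] at hq ⊢
  set l := Filter.comap toWeakStar (nhdsWithin (toWeakStar q) (toWeakStar '' C)) ⊓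
    Filter.principal C
  have : l.NeBot := Filter.comap_inf_principal_neBot_of_image_mem
    (mem_closure_iff_nhdsWithin_neBot.1 hq) self_mem_nhdsWithin
  have hlim : Filter.Tendsto toWeakStar l (nhds (toWeakStar q)) :=
    (Filter.tendsto_comap.mono_left inf_le_left).mono_right nhdsWithin_le_nhds
  have hslack : Filter.Tendsto (slack x) l (nhds 0) :=
    hq0 ▸ ((continuous_slack_weakStar x).tendsto _).comp hlim
  have hC : ∀ᶠ w in l, w ∈ C := Filter.mem_inf_of_right (Filter.mem_principal_self C)
  choose! f hfD hf using happrox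
  have hnear : ∀ᶠ w in l, f w ∈ D ∧ ‖w - f w‖ ≤ K * slack x w :=
    (hC.and (hslack.eventually_lt_const hε)).mono fun w hw => ⟨hfD w hw.1 hw.2, hf w hw.1 hw.2⟩
  have hdiff : Filter.Tendsto (fun w => w - f w) l (nhds 0) :=
    squeeze_zero_norm' (hnear.mono fun _ hw => hw.2) (by simpa using hslack.const_mul K)
  have hfq : Filter.Tendsto (fun w => toWeakStar (f w)) l (nhds (toWeakStar q)) := by
    simpa [toWeakStar_sub, toWeakStar_zero] using
      hlim.sub ((continuous_toWeakStar.tendsto 0).comp hdiff)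
  exact mem_closure_of_tendsto hfq (hnear.mono fun w hw => Set.mem_image_of_mem _ hw.1)

end WeakStarClosure

theorem convex_setOf_exists_norm_sub_le {E : Type*} [SeminormedAddCommGroup E] [NormedSpace ℝ E]
    {D : Set E} (hD : Convex ℝ D) (ℓ : E →ₗ[ℝ] ℝ) :
    Convex ℝ {w | ∃ u ∈ D, ‖w - u‖ ≤ ℓ w} := by
  rintro w₁ ⟨u₁, hu₁, h₁⟩ w₂ ⟨u₂, hu₂, h₂⟩ α β hα hβ hαβ
  refine ⟨α • u₁ + β • u₂, hD hu₁ hu₂ hα hβ hαβ, ?_⟩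
  calc ‖α • w₁ + β • w₂ - (α • u₁ + β • u₂)‖ = ‖α • (w₁ - u₁) + β • (w₂ - u₂)‖ := by
        congr 1; module
    _ ≤ α * ‖w₁ - u₁‖ + β * ‖w₂ - u₂‖ := by
        refine norm_add_le_of_le ?_ ?_ <;> rw [norm_smul, Real.norm_of_nonneg ‹_›]
    _ ≤ α * ℓ w₁ + β * ℓ w₂ := by gcongr
    _ = ℓ (α • w₁ + β • w₂) := by simp

section ActiveHull

variable {X : Type*} [NormedAddCommGroup X] [NormedSpace ℝ X]

theorem norm_sub_le_mul_slack {x : X} {M ε : ℝ} (hε : 0 < ε)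
    {g h : (X →L[ℝ] ℝ) × ℝ} (hg : ‖g.1‖ ≤ M) (hh : ‖h.1‖ ≤ M)
    (hh0 : 0 ≤ slack x h) (hhε : slack x h ≤ ε) (hgε : ε < slack x g) :
    ‖g - h‖ ≤ (2 * M * (1 + ‖x‖) / ε + 2) * slack x g := by
  have hM : 0 ≤ M := (norm_nonneg _).trans hg
  have hc : 2 * M * (1 + ‖x‖) ≤ 2 * M * (1 + ‖x‖) / ε * slack x g := by
    rw [div_mul_eq_mul_div, le_div_iff₀ hε]
    gcongr
  have hgx : |g.1 x| ≤ M * ‖x‖ := (g.1.le_opNorm x).trans (by gcongr)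
  have hhx : |h.1 x| ≤ M * ‖x‖ := (h.1.le_opNorm x).trans (by gcongr)
  simp only [slack_apply] at hh0 hhε hgε hc ⊢
  rw [norm_prod_le_iff, Prod.fst_sub, Prod.snd_sub, Real.norm_eq_abs]
  constructor
  · nlinarith [norm_sub_le g.1 h.1, norm_nonneg x]
  · rw [abs_le] at hgx hhx ⊢
    constructor <;> nlinarith [norm_nonneg x]

theorem exists_mem_convexHull_active_norm_sub_le {G : Set ((X →L[ℝ] ℝ) × ℝ)} {x : X} {M ε : ℝ}
    (hε : 0 < ε) (hG : ∀ g ∈ G, ‖g.1‖ ≤ M ∧ 0 ≤ slack x g)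
    {w : (X →L[ℝ] ℝ) × ℝ} (hw : w ∈ convexHull ℝ G) (hwε : slack x w < ε) :
    ∃ w' ∈ convexHull ℝ {g ∈ G | slack x g ≤ ε},
      ‖w - w'‖ ≤ (2 * M * (1 + ‖x‖) / ε + 2) * slack x w := by
  set K := 2 * M * (1 + ‖x‖) / ε + 2
  obtain ⟨g₀, hg₀G, hg₀ε⟩ : ∃ g₀ ∈ G, slack x g₀ ≤ ε := by
    by_contra! h
    have : convexHull ℝ G ⊆ {w | ε ≤ slack x w} :=
      convexHull_min (fun g hg => (h g hg).le) (convex_halfSpace_ge (slack x).isLinear ε)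
    exact (this hw).not_gt hwε
  have hK : 0 ≤ K := by have := (norm_nonneg _).trans (hG g₀ hg₀G).1; positivity
  refine convexHull_min
    (t := {w | ∃ u ∈ convexHull ℝ {g ∈ G | slack x g ≤ ε}, ‖w - u‖ ≤ (K • slack x) w})
    ?_ (convex_setOf_exists_norm_sub_le (convex_convexHull ℝ _) _) hw
  intro g hg
  by_cases hgε : slack x g ≤ ε
  · exact ⟨g, subset_convexHull ℝ _ ⟨hg, hgε⟩, by simpa using mul_nonneg hK (hG g hg).2⟩
  · exact ⟨g₀, subset_convexHull ℝ _ ⟨hg₀G, hg₀ε⟩, norm_sub_le_mul_slack hε (hG g hg).1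
      (hG g₀ hg₀G).1 (hG g₀ hg₀G).2 hg₀ε (not_le.1 hgε)⟩

theorem slack_eq_zero_of_forall_mem_wclosure2 {G : Set ((X →L[ℝ] ℝ) × ℝ)} {x : X}
    (hG : ∀ g ∈ G, 0 ≤ slack x g) {q : (X →L[ℝ] ℝ) × ℝ}
    (hq : ∀ ε > 0, q ∈ wclosure2 (convexHull ℝ {g ∈ G | slack x g ≤ ε})) :
    slack x q = 0 := by
  have hslack (ε : ℝ) (hε : 0 < ε) : slack x q ∈ Set.Icc 0 ε :=
    wclosure2_subset_slack_preimage x isClosed_Icc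
      (convexHull_min (fun g hg => ⟨hG g hg.1, hg.2⟩)
        ((convex_Icc 0 ε).linear_preimage (slack x))) (hq ε hε)
  exact le_antisymm (le_of_forall_pos_le_add fun ε hε => by simpa using (hslack ε hε).2)
    (hslack 1 one_pos).1

end ActiveHull

theorem stmt_7_general {T : Type*}
    {X : Type*} [NormedAddCommGroup X] [NormedSpace ℝ X]
    (a : T → X →L[ℝ] ℝ) (b : T → ℝ)
    (hbdd : Bornology.IsBounded (Set.range a))
    (C0 : Set ((X →L[ℝ] ℝ) × ℝ)) (hC0 : C0 = convexHull ℝ {w | ∃ t : T, w = (a t, b t)})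
    (xb : X) (hxb : ∀ t : T, a t xb ≤ b t) :
    {q : (X →L[ℝ] ℝ) × ℝ | q ∈ wclosure2 C0 ∧ q.2 = q.1 xb} =
      ⋂ ε ∈ Set.Ioi (0 : ℝ),
        wclosure2 (convexHull ℝ {w : (X →L[ℝ] ℝ) × ℝ |
          ∃ t : T, b t - ε ≤ a t xb ∧ w = (a t, b t)}) := by
  obtain ⟨M, hM⟩ := isBounded_iff_forall_norm_le.1 hbdd
  set G := {w : (X →L[ℝ] ℝ) × ℝ | ∃ t : T, w = (a t, b t)}
  have hG : ∀ g ∈ G, ‖g.1‖ ≤ M ∧ 0 ≤ slack xb g := by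
    rintro _ ⟨t, rfl⟩
    exact ⟨hM _ ⟨t, rfl⟩, sub_nonneg.2 (hxb t)⟩
  have hactive (ε : ℝ) :
      {w : (X →L[ℝ] ℝ) × ℝ | ∃ t : T, b t - ε ≤ a t xb ∧ w = (a t, b t)} =
        {g ∈ G | slack xb g ≤ ε} := by
    ext w
    constructor
    · rintro ⟨t, ht, rfl⟩
      exact ⟨⟨t, rfl⟩, by simp only [slack_apply]; linarith⟩
    · rintro ⟨⟨t, rfl⟩, ht⟩
      exact ⟨t, by simp only [slack_apply] at ht; linarith, rfl⟩
  subst hC0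
  ext q
  simp only [hactive, Set.mem_ofPred_eq, Set.mem_iInter, Set.mem_Ioi]
  constructor
  · rintro ⟨hq, hq0⟩ ε hε
    exact mem_wclosure2_of_slack_approx xb hε hq (by simp [hq0])
      fun w hw hwε => exists_mem_convexHull_active_norm_sub_le hε hG hw hwε
  · intro hq
    refine ⟨wclosure2_mono (convexHull_mono (Set.sep_subset _ _)) (hq 1 one_pos), ?_⟩
    exact sub_eq_zero.1 (slack_eq_zero_of_forall_mem_wclosure2 (fun g hg => (hG g hg).2) hq)

theorem stmt_7 {T : Type*} [Nonempty T]
    {X : Type*} [NormedAddCommGroup X] [NormedSpace ℝ X] [CompleteSpace X]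
    (a : T → X →L[ℝ] ℝ) (b : T → ℝ)
    (hbdd : Bornology.IsBounded (Set.range a))
    (C0 : Set ((X →L[ℝ] ℝ) × ℝ)) (hC0 : C0 = convexHull ℝ {w | ∃ t : T, w = (a t, b t)})
    (xb : X) (hxb : ∀ t : T, a t xb ≤ b t) :
    {q : (X →L[ℝ] ℝ) × ℝ | q ∈ wclosure2 C0 ∧ q.2 = q.1 xb} =
      ⋂ ε ∈ Set.Ioi (0 : ℝ),
        wclosure2 (convexHull ℝ {w : (X →L[ℝ] ℝ) × ℝ |
          ∃ t : T, b t - ε ≤ a t xb ∧ w = (a t, b t)}) :=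
  stmt_7_general a b hbdd C0 hC0 xb hxb
end

section
/- Let (0, x̄) with x̄ ∈ F(0) be a local minimizer of φ over gph F, i.e., there is a neighborhood W of (0, x̄) in l_∞(T) × X such that φ(0, x̄) ≤ φ(p, x) for all (p, x) ∈ W with x ∈ F(p), where φ : l_∞(T) × X → ℝ ∪ {±∞} is finite at (0, x̄). Then every Fréchet upper subgradient (p*, x*) ∈ ∂̂⁺φ(0, x̄) satisfies −(p*, x*, ⟨x*, x̄⟩) ∈ cl* cone(⋃_{t∈T} ({−δ_t} × gph f_t*)) in l_∞(T)* × X* × ℝ. -/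
open Filter
open scoped ENNReal

/-!
Suppose the point lies outside the weak* closure. Hahn–Banach separation in
`l_∞(T)* × X* × ℝ` with its weak* topology gives a functional that is `≤ 0` on the
generators of the cone and `> 0` at the point; weak* continuous functionals are evaluations,
so it is a triple `(p, x, r)` with `⟨u, x⟩ + r c ≤ p_t` for all `(u, c) ∈ gph f_t*`, and
`⟨p*, p⟩ + ⟨x*, x⟩ + r ⟨x*, x̄⟩ < 0`. By Fenchel–Moreau these inequalities say that
`x̄ + λ (x + r x̄) ∈ F(λ p)` for small `λ > 0`. Along this feasible direction, local
minimality and the upper subgradient inequality force `⟨p*, p⟩ + ⟨x*, x + r x̄⟩ ≥ 0`,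
a contradiction.
-/

open Topology

section Conjugate

def epigraph {X : Type*} (g : X → EReal) : Set (X × ℝ) := {q | g q.1 ≤ q.2}

lemma LowerSemicontinuous.isClosed_epigraph_real {X : Type*} [TopologicalSpace X]
    {g : X → EReal} (hl : LowerSemicontinuous g) : IsClosed (epigraph g) :=
  hl.isClosed_epigraph.preimage
    (continuous_fst.prodMk (continuous_coe_real_ereal.comp continuous_snd))

lemma ErealProper.exists_eq_coe {X : Type*} {g : X → EReal} (hp : ErealProper g) :
    ∃ x, ∃ v : ℝ, g x = v := by
  obtain ⟨x, hx⟩ := hp.2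
  exact ⟨x, (g x).toReal, (EReal.coe_toReal hx (hp.1 x)).symm⟩

variable {X : Type*} [NormedAddCommGroup X] [NormedSpace ℝ X] {g : X → EReal}

lemma ErealConvexOn.convex_epigraph (hc : ErealConvexOn g) : Convex ℝ (epigraph g) := by
  rintro ⟨x, s⟩ (hx : g x ≤ s) ⟨y, t⟩ (hy : g y ≤ t) a b ha hb hab
  calc g (a • x + b • y) ≤ (a : EReal) * g x + (b : EReal) * g y := hc x y a b ha hb hab
    _ ≤ (a : EReal) * s + (b : EReal) * t := by gcongr
    _ = ((a • (x, s) + b • (y, t)).2 : ℝ) := by simp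

lemma coe_sub_le_conj (g : X → EReal) (u : X →L[ℝ] ℝ) (x : X) :
    (u x : EReal) - g x ≤ conj g u :=
  le_iSup (fun x => (u x : EReal) - g x) x

lemma sub_le_of_conj_eq {u : X →L[ℝ] ℝ} {c : ℝ} (hu : conj g u = c) {x : X} {a : ℝ}
    (hx : g x ≤ a) : u x - c ≤ a := by
  have h := coe_sub_le_conj g u x
  rw [hu] at h
  induction hgx : g x using EReal.rec with
  | bot => simp [hgx] at h
  | top => simp [hgx] at hx
  | coe v =>
    rw [hgx] at h hx
    norm_cast at h hx
    linarith

lemma exists_conj_eq_le (hp : ErealProper g) {u : X →L[ℝ] ℝ} {β : ℝ}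
    (h : ∀ y (s : ℝ), g y ≤ s → u y - s ≤ β) : ∃ c : ℝ, conj g u = c ∧ c ≤ β := by
  have hle : conj g u ≤ β := iSup_le fun y => by
    induction hgy : g y using EReal.rec with
    | bot => exact absurd hgy (hp.1 y)
    | top => simp
    | coe s => exact_mod_cast h y s hgy.le
  obtain ⟨x, v, hv⟩ := hp.exists_eq_coe
  have hbot : conj g u ≠ ⊥ :=
    ne_bot_of_le_ne_bot (by rw [hv]; exact_mod_cast EReal.coe_ne_bot _) (coe_sub_le_conj g u x)
  induction hcu : conj g u using EReal.rec with
  | bot => exact absurd hcu hbot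
  | top => simp [hcu] at hle
  | coe c => exact ⟨c, rfl, by rw [hcu] at hle; exact_mod_cast hle⟩

lemma exists_separation_epigraph (hp : ErealProper g) (hl : LowerSemicontinuous g)
    (hc : ErealConvexOn g) {z : X} {a : ℝ} (hza : ¬ g z ≤ a) :
    ∃ (u : X →L[ℝ] ℝ) (k b : ℝ), 0 ≤ k ∧
      (∀ y (s : ℝ), g y ≤ s → u y - k * s < b) ∧ b < u z - k * a := by
  obtain ⟨F, b, hFepi, hFz⟩ := geometric_hahn_banach_closed_point
    hc.convex_epigraph hl.isClosed_epigraph_real (x := (z, a)) hza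
  set u := F.comp (ContinuousLinearMap.inl ℝ X ℝ)
  set k := -F (0, 1)
  have hF : ∀ y s, F (y, s) = u y - k * s := fun y s => by
    have hys : F (y, s) = F (y, 0) + s • F (0, 1) := by rw [← map_smul, ← map_add]; simp
    simp [hys, u, k, mul_comm]
  simp only [hF] at hFepi hFz
  refine ⟨u, k, b, ?_, fun y s hys => hFepi (y, s) hys, hFz⟩
  -- the epigraph contains vertical rays, on which `u y - k * s` is bounded above only if `k ≥ 0`
  obtain ⟨x, v, hv⟩ := hp.exists_eq_coe
  by_contra! hk
  set d := |b - u x + k * v| / -k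
  have hd : 0 ≤ d := div_nonneg (abs_nonneg _) (by linarith)
  have hkd : -k * d = |b - u x + k * v| := mul_div_cancel₀ _ (by linarith)
  have := hFepi (x, v + d) (by
    show g x ≤ ((v + d : ℝ) : EReal)
    exact hv ▸ EReal.coe_le_coe_iff.2 (le_add_of_nonneg_right hd))
  linarith [le_abs_self (b - u x + k * v)]

lemma exists_conj_eq_lt_of_separation (hp : ErealProper g) {u : X →L[ℝ] ℝ} {k b : ℝ}
    (hk : 0 < k) (hsep : ∀ y (s : ℝ), g y ≤ s → u y - k * s < b) {z : X} {a : ℝ}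
    (hz : b < u z - k * a) : ∃ (v : X →L[ℝ] ℝ) (c : ℝ), conj g v = c ∧ a < v z - c := by
  have hscale : ∀ y s, (k⁻¹ • u) y - s = k⁻¹ * (u y - k * s) := fun y s => by
    rw [smul_apply, smul_eq_mul]
    field_simp
  obtain ⟨c, hc, hcb⟩ := exists_conj_eq_le (u := k⁻¹ • u) (β := k⁻¹ * b) hp
    fun y s hys => hscale y s ▸ mul_le_mul_of_nonneg_left (hsep y s hys).le (inv_nonneg.2 hk.le)
  refine ⟨k⁻¹ • u, c, hc, ?_⟩
  have := mul_lt_mul_of_pos_left hz (inv_pos.2 hk)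
  rw [← hscale] at this
  linarith

lemma exists_conj_eq (hp : ErealProper g) (hl : LowerSemicontinuous g) (hc : ErealConvexOn g) :
    ∃ (u : X →L[ℝ] ℝ) (c : ℝ), conj g u = c := by
  obtain ⟨x, v, hv⟩ := hp.exists_eq_coe
  have hxv : ¬ g x ≤ (v - 1 : ℝ) := by rw [hv]; exact_mod_cast (by linarith : ¬ v ≤ v - 1)
  obtain ⟨u, k, b, -, hsep, hb⟩ := exists_separation_epigraph hp hl hc hxv
  have hk : 0 < k := by linarith [hsep x v hv.le]
  obtain ⟨w, c, hw, -⟩ := exists_conj_eq_lt_of_separation hp hk hsep hb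
  exact ⟨w, c, hw⟩

/-- Fenchel–Moreau theorem, `g = g**`. -/
theorem le_coe_iff_forall_conj_eq (hp : ErealProper g) (hl : LowerSemicontinuous g)
    (hc : ErealConvexOn g) {z : X} {a : ℝ} :
    g z ≤ a ↔ ∀ (u : X →L[ℝ] ℝ) (c : ℝ), conj g u = c → u z - c ≤ a := by
  refine ⟨fun hz u c hu => sub_le_of_conj_eq hu hz, fun h => ?_⟩
  by_contra hza
  suffices ∃ (v : X →L[ℝ] ℝ) (c : ℝ), conj g v = c ∧ a < v z - c by
    obtain ⟨v, c, hv, hlt⟩ := this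
    linarith [h v c hv]
  obtain ⟨u, k, b, hk, hsep, hb⟩ := exists_separation_epigraph hp hl hc hza
  rcases hk.lt_or_eq with hk | rfl
  · exact exists_conj_eq_lt_of_separation hp hk hsep hb
  -- a vertical hyperplane `u = b`: tilt an affine minorant `w` of `g` by a large multiple of `u`
  simp only [zero_mul, sub_zero] at hsep hb
  obtain ⟨w, c, hw⟩ := exists_conj_eq hp hl hc
  obtain ⟨n, hn⟩ := exists_nat_gt ((c + 1 + a - w z) / (u z - b))
  rw [div_lt_iff₀ (by linarith)] at hn
  refine exists_conj_eq_lt_of_separation (u := w + (n : ℝ) • u) (k := 1) (b := c + n * b + 1)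
    hp one_pos (fun y s hys => ?_) ?_
  · have := sub_le_of_conj_eq hw hys
    have := mul_le_mul_of_nonneg_left (hsep y s hys).le n.cast_nonneg
    simp only [add_apply, smul_apply, smul_eq_mul]
    linarith
  · simp only [add_apply, smul_apply, smul_eq_mul]
    linarith

end Conjugate

section ConeHull

variable {V : Type*} [AddCommMonoid V] [Module ℝ V] {S : Set V}

lemma smul_mem_coneHull {s : V} (hs : s ∈ S) {r : ℝ} (hr : 0 ≤ r) : r • s ∈ coneHull S :=
  ⟨r, hr, s, subset_convexHull ℝ S hs, rfl⟩

lemma convex_coneHull (S : Set V) : Convex ℝ (coneHull S) := by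
  rintro _ ⟨r, hr, y, hy, rfl⟩ _ ⟨r', hr', y', hy', rfl⟩ a b ha hb hab
  have hρ : 0 ≤ a * r + b * r' := by positivity
  rcases hρ.eq_or_lt with hρ | hρ
  · have har : a * r = 0 := by nlinarith [mul_nonneg ha hr, mul_nonneg hb hr']
    have hbr : b * r' = 0 := by nlinarith [mul_nonneg ha hr, mul_nonneg hb hr']
    refine ⟨0, le_rfl, y, hy, ?_⟩
    simp [smul_smul, har, hbr]
  · set ρ := a * r + b * r'
    refine ⟨ρ, hρ.le, (a * r / ρ) • y + (b * r' / ρ) • y',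
      convex_convexHull ℝ S hy hy' (by positivity) (by positivity) ?_, ?_⟩
    · rw [← add_div, div_self hρ.ne']
    · simp only [smul_add, smul_smul, mul_div_cancel₀ _ hρ.ne']

lemma exists_pos_of_notMem_closure_image_coneHull {E : Type*} [AddCommGroup E] [Module ℝ E]
    [TopologicalSpace E] [IsTopologicalAddGroup E] [ContinuousSMul ℝ E]
    [LocallyConvexSpace ℝ E] (L : V →ₗ[ℝ] E) (hS : S.Nonempty) {x : E}
    (hx : x ∉ closure (L '' coneHull S)) :
    ∃ G : StrongDual ℝ E, (∀ s ∈ S, G (L s) ≤ 0) ∧ 0 < G x := by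
  obtain ⟨G, b, hG, hGx⟩ := geometric_hahn_banach_closed_point
    ((convex_coneHull S).linear_image L).closure isClosed_closure hx
  have hray : ∀ s ∈ S, ∀ r : ℝ, 0 ≤ r → r * G (L s) < b := fun s hs r hr => by
    simpa using hG _ (subset_closure ⟨r • s, smul_mem_coneHull hs hr, rfl⟩)
  obtain ⟨s₀, hs₀⟩ := hS
  have hb : 0 < b := by simpa using hray s₀ hs₀ 0 le_rfl
  refine ⟨G, fun s hs => ?_, hb.trans hGx⟩
  by_contra! hpos
  simpa [div_mul_cancel₀ _ hpos.ne'] using hray s hs (b / G (L s)) (by positivity)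

end ConeHull

section WeakStar

variable {E Y : Type*} [AddCommGroup E] [TopologicalSpace E] [Module ℝ E]
  [AddCommGroup Y] [TopologicalSpace Y] [Module ℝ Y]

instance WeakDual.instLocallyConvexSpace : LocallyConvexSpace ℝ (WeakDual ℝ Y) :=
  WeakBilin.locallyConvexSpace

lemma WeakDual.exists_apply_eq (G : StrongDual ℝ (WeakDual ℝ Y)) :
    ∃ y : Y, ∀ φ : WeakDual ℝ Y, G φ = φ y := by
  obtain ⟨y, rfl⟩ := LinearMap.dualEmbedding_surjective (topDualPairing ℝ Y) G
  exact ⟨y, fun φ => rfl⟩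

variable (E Y) in
noncomputable def toWeakDualProd :
    StrongDual ℝ E × (StrongDual ℝ Y × ℝ) →ₗ[ℝ] WeakDual ℝ E × (WeakDual ℝ Y × ℝ) :=
  StrongDual.toWeakDual.toLinearMap.prodMap
    (StrongDual.toWeakDual.toLinearMap.prodMap LinearMap.id)

lemma exists_apply_toWeakDualProd_eq (G : StrongDual ℝ (WeakDual ℝ E × (WeakDual ℝ Y × ℝ))) :
    ∃ (e : E) (y : Y) (r : ℝ),
      ∀ w, G (toWeakDualProd E Y w) = w.1 e + w.2.1 y + w.2.2 * r := by
  obtain ⟨e, he⟩ := WeakDual.exists_apply_eq (G.comp (.inl ℝ _ _))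
  obtain ⟨y, hy⟩ :=
    WeakDual.exists_apply_eq (G.comp ((ContinuousLinearMap.inr ℝ _ _).comp (.inl ℝ _ _)))
  refine ⟨e, y, G (0, 0, 1), fun ⟨φ, ψ, s⟩ => ?_⟩
  have hsplit : toWeakDualProd E Y (φ, ψ, s) =
      (StrongDual.toWeakDual φ, 0, 0) + (0, StrongDual.toWeakDual ψ, 0) + s • (0, 0, 1) := by
    simp [toWeakDualProd]
  have hφ := he (StrongDual.toWeakDual φ)
  have hψ := hy (StrongDual.toWeakDual ψ)
  simp only [ContinuousLinearMap.comp_apply, ContinuousLinearMap.inl_apply,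
    ContinuousLinearMap.inr_apply] at hφ hψ
  rw [hsplit, map_add, map_add, map_smul, smul_eq_mul, Prod.mk_zero_zero, hφ, hψ]
  rfl

end WeakStar

lemma mem_wclosure3_iff {T X : Type*} [NormedAddCommGroup X] [NormedSpace ℝ X]
    {A : Set ((Linf T →L[ℝ] ℝ) × ((X →L[ℝ] ℝ) × ℝ))}
    {q : (Linf T →L[ℝ] ℝ) × ((X →L[ℝ] ℝ) × ℝ)} :
    q ∈ wclosure3 A ↔
      toWeakDualProd (Linf T) X q ∈ closure (toWeakDualProd (Linf T) X '' A) :=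
  Iff.rfl

lemma IsLocalMinOn.nonneg_apply_of_upper_estimate {Z : Type*} [NormedAddCommGroup Z]
    [NormedSpace ℝ Z] {φ : Z → EReal} {A : Set Z} {z₀ : Z} (hmin : IsLocalMinOn φ A z₀)
    {c : ℝ} (hc : φ z₀ = c) {zs : StrongDual ℝ Z}
    (hup : ∀ ε : ℝ, 0 < ε →
      ∀ᶠ z in 𝓝 z₀, φ z ≤ ((c + zs (z - z₀) + ε * ‖z - z₀‖ : ℝ) : EReal))
    {v : Z} (hv : ∀ᶠ t in 𝓝[>] (0 : ℝ), z₀ + t • v ∈ A) : 0 ≤ zs v := by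
  have hpath : Tendsto (fun t : ℝ => z₀ + t • v) (𝓝[>] 0) (𝓝 z₀) := by
    refine tendsto_nhdsWithin_of_tendsto_nhds ?_
    have : Continuous fun t : ℝ => z₀ + t • v := by fun_prop
    simpa using this.tendsto 0
  have hε : ∀ ε : ℝ, 0 < ε → 0 ≤ zs v + ε * ‖v‖ := fun ε hε => by
    obtain ⟨t, ht, htA, htmin, htup⟩ := (eventually_mem_nhdsWithin.and (hv.and
      (hpath.eventually ((eventually_nhdsWithin_iff.1 hmin).and (hup ε hε))))).exists
    have := (hc ▸ htmin htA).trans htup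
    rw [add_sub_cancel_left, map_smul, norm_smul, Real.norm_of_nonneg ht.le] at this
    have : 0 ≤ t * (zs v + ε * ‖v‖) := by
      have := EReal.coe_le_coe_iff.1 this
      simp only [smul_eq_mul] at this
      linarith
    exact nonneg_of_mul_nonneg_right this ht
  have hlim : Tendsto (fun ε : ℝ => zs v + ε * ‖v‖) (𝓝[>] 0) (𝓝 (zs v)) := by
    have : Continuous fun ε : ℝ => zs v + ε * ‖v‖ := by fun_prop
    simpa using (this.tendsto 0).mono_left nhdsWithin_le_nhds
  exact ge_of_tendsto hlim (eventually_mem_nhdsWithin.mono hε)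

section Feasibility

variable {T X : Type*} [NormedAddCommGroup X] [NormedSpace ℝ X] {f : T → X → EReal}

lemma dirac_apply (t : T) (p : Linf T) : dirac T t p = p t := rfl

lemma add_smul_mem_feas (hproper : ∀ t, ErealProper (f t))
    (hlsc : ∀ t, LowerSemicontinuous (f t)) (hconv : ∀ t, ErealConvexOn (f t))
    {xb : X} (hxb : xb ∈ feas f 0) {p : Linf T} {x : X} {r : ℝ}
    (hpolar : ∀ t u (c : ℝ), conj (f t) u = c → u x + c * r ≤ p t)
    {l : ℝ} (hl : 0 ≤ l) (hlr : 0 ≤ 1 + l * r) :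
    xb + l • (x + r • xb) ∈ feas f (l • p) := fun t => by
  rw [lp.coeFn_smul, Pi.smul_apply, smul_eq_mul,
    le_coe_iff_forall_conj_eq (hproper t) (hlsc t) (hconv t)]
  intro u c hu
  have hxbu : u xb - c ≤ 0 := sub_le_of_conj_eq hu (by simpa using hxb t)
  have := hpolar t u c hu
  simp only [map_add, map_smul, smul_eq_mul]
  -- the left side is `(1 + l * r) * (u xb - c) + l * (u x + c * r)`
  nlinarith [mul_le_mul_of_nonneg_left hxbu hlr, mul_le_mul_of_nonneg_left this hl]

lemma eventually_add_smul_mem_feas (hproper : ∀ t, ErealProper (f t))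
    (hlsc : ∀ t, LowerSemicontinuous (f t)) (hconv : ∀ t, ErealConvexOn (f t))
    {xb : X} (hxb : xb ∈ feas f 0) {p : Linf T} {x : X} {r : ℝ}
    (hpolar : ∀ t u (c : ℝ), conj (f t) u = c → u x + c * r ≤ p t) :
    ∀ᶠ l in 𝓝[>] (0 : ℝ), xb + l • (x + r • xb) ∈ feas f (l • p) := by
  have hr : ∀ᶠ l in 𝓝 (0 : ℝ), 0 < 1 + l * r := by
    have : Continuous fun l : ℝ => 1 + l * r := by fun_prop
    simpa using (this.tendsto 0).eventually (lt_mem_nhds (by simp : (0 : ℝ) < 1 + 0 * r))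
  filter_upwards [eventually_mem_nhdsWithin, nhdsWithin_le_nhds hr] with l hl hlr
  exact add_smul_mem_feas hproper hlsc hconv hxb hpolar hl.le hlr.le

lemma nonneg_of_feasible_direction {xb : X} {φ : Linf T × X → EReal} {c : ℝ}
    (hfin : φ (0, xb) = (c : EReal))
    (hmin : ∃ W ∈ 𝓝 ((0 : Linf T), xb), ∀ q ∈ W, q.2 ∈ feas f q.1 → φ (0, xb) ≤ φ q)
    {ps : Linf T →L[ℝ] ℝ} {xs : X →L[ℝ] ℝ}
    (hup : ∀ ε : ℝ, 0 < ε → ∀ᶠ q : Linf T × X in 𝓝 (0, xb),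
      φ q ≤ ((c + ps q.1 + xs (q.2 - xb) + ε * ‖(q.1, q.2 - xb)‖ : ℝ) : EReal))
    {P : Linf T} {V : X} (hPV : ∀ᶠ l in 𝓝[>] (0 : ℝ), xb + l • V ∈ feas f (l • P)) :
    0 ≤ ps P + xs V := by
  have hmin' : IsLocalMinOn φ (feasGraph f) (0, xb) :=
    eventually_nhdsWithin_iff.2 (eventually_iff_exists_mem.2 hmin)
  show 0 ≤ ps.coprod xs (P, V)
  refine hmin'.nonneg_apply_of_upper_estimate hfin (fun ε hε => ?_) ?_
  · filter_upwards [hup ε hε] with q hq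
    have hq' : q - (0, xb) = (q.1, q.2 - xb) := by ext <;> simp
    rwa [hq', ContinuousLinearMap.coprod_apply, ← add_assoc]
  · filter_upwards [hPV] with l hl
    rwa [Prod.smul_mk, Prod.mk_add_mk, zero_add]

end Feasibility

theorem stmt_8_general {T : Type*} [Nonempty T]
    {X : Type*} [NormedAddCommGroup X] [NormedSpace ℝ X]
    (f : T → X → EReal)
    (hproper : ∀ t, ErealProper (f t))
    (hlsc : ∀ t, LowerSemicontinuous (f t))
    (hconv : ∀ t, ErealConvexOn (f t))
    (xb : X) (hxb : xb ∈ feas f 0)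
    (φ : Linf T × X → EReal) (c : ℝ) (hfin : φ (0, xb) = (c : EReal))
    (hmin : ∃ W ∈ nhds ((0 : Linf T), xb), ∀ q ∈ W, q.2 ∈ feas f q.1 → φ (0, xb) ≤ φ q)
    (ps : Linf T →L[ℝ] ℝ) (xs : X →L[ℝ] ℝ)
    (hup : ∀ ε : ℝ, 0 < ε → ∀ᶠ q : Linf T × X in nhds (0, xb),
      φ q ≤ ((c + ps q.1 + xs (q.2 - xb) + ε * ‖(q.1, q.2 - xb)‖ : ℝ) : EReal)) :
    (-ps, (-xs, -(xs xb))) ∈ wclosure3 (coneHull (⋃ t : T,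
      ({-(dirac T t)} : Set (Linf T →L[ℝ] ℝ)) ×ˢ gphConj (f t))) := by
  set S := ⋃ t : T, ({-(dirac T t)} : Set (Linf T →L[ℝ] ℝ)) ×ˢ gphConj (f t)
  have hmem : ∀ t u (c : ℝ), conj (f t) u = c → (-(dirac T t), u, c) ∈ S := fun t _ _ hu =>
    Set.mem_iUnion.2 ⟨t, Set.mk_mem_prod (Set.mem_singleton _) hu⟩
  have hS : S.Nonempty := by
    obtain ⟨t⟩ := ‹Nonempty T›
    obtain ⟨u, c, hu⟩ := exists_conj_eq (hproper t) (hlsc t) (hconv t)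
    exact ⟨_, hmem t u c hu⟩
  rw [mem_wclosure3_iff]
  by_contra hcon
  obtain ⟨G, hGS, hGpt⟩ :=
    exists_pos_of_notMem_closure_image_coneHull (toWeakDualProd (Linf T) X) hS hcon
  obtain ⟨p, x, r, hG⟩ := exists_apply_toWeakDualProd_eq G
  have hpolar : ∀ t u (c : ℝ), conj (f t) u = c → u x + c * r ≤ p t := fun t u c hu => by
    have := hGS _ (hmem t u c hu)
    rw [hG] at this
    simp only [neg_apply, dirac_apply] at this
    linarith
  have hdir := nonneg_of_feasible_direction hfin hmin hup
    (eventually_add_smul_mem_feas hproper hlsc hconv hxb hpolar)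
  rw [hG] at hGpt
  simp only [map_add, map_smul, smul_eq_mul, neg_apply] at hdir hGpt
  linarith

theorem stmt_8 {T : Type*} [Nonempty T]
    {X : Type*} [NormedAddCommGroup X] [NormedSpace ℝ X] [CompleteSpace X]
    (f : T → X → EReal)
    (hproper : ∀ t, ErealProper (f t))
    (hlsc : ∀ t, LowerSemicontinuous (f t))
    (hconv : ∀ t, ErealConvexOn (f t))
    (xb : X) (hxb : xb ∈ feas f 0)
    (φ : Linf T × X → EReal) (c : ℝ) (hfin : φ (0, xb) = (c : EReal))
    (hmin : ∃ W ∈ nhds ((0 : Linf T), xb), ∀ q ∈ W, q.2 ∈ feas f q.1 → φ (0, xb) ≤ φ q)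
    (ps : Linf T →L[ℝ] ℝ) (xs : X →L[ℝ] ℝ)
    (hup : ∀ ε : ℝ, 0 < ε → ∀ᶠ q : Linf T × X in nhds (0, xb),
      φ q ≤ ((c + ps q.1 + xs (q.2 - xb) + ε * ‖(q.1, q.2 - xb)‖ : ℝ) : EReal)) :
    (-ps, (-xs, -(xs xb))) ∈ wclosure3 (coneHull (⋃ t : T,
      ({-(dirac T t)} : Set (Linf T →L[ℝ] ℝ)) ×ˢ gphConj (f t))) :=
  stmt_8_general f hproper hlsc hconv xb hxb φ c hfin hmin ps xs hup
end

section
/- Let X be a reflexive Banach space, let p ∈ l_∞(T), and assume σ(p) satisfies the strong Slater condition, i.e., there is x̂ ∈ X with sup_{t∈T}(f_t(x̂) − p_t) < 0. Then for every x ∈ X: dist(x; F(p)) = sup{ [⟨x*, x⟩ − α]_+ / ‖x*‖ : (x*, α) ∈ C(p) }, under the convention 0/0 := 0 (i.e., no closure of C(p) is needed). -/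
open Filter
open scoped ENNReal

/-!
Each `(x*, α) ∈ C(p)` gives, by the Fenchel–Young inequality, a half-space `x* ≤ α` containing
`F(p)`, and `[x*(x) - α]₊ / ‖x*‖` is the distance from `x` to that half-space; this bounds the
supremum by `dist(x; F(p))`. Conversely, separating a ball `B(x, d) ⊆ X \ F(p)` from the convex
set `F(p)` yields `x* ≠ 0` and `α` with `x* ≤ α` on `F(p)` and `(x*(x) - α) / ‖x*‖ ≥ d`. A Farkas
lemma puts `(x*, α)` in the norm closure of the cone `ℝ₊ (C(p) + {0} × ℝ₊)`: a functional on
`X* × ℝ` separating it from that cone is, by reflexivity, evaluation at some `(y, r) ∈ X × ℝ`, and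
then either `-y / r` (if `r > 0`) or a ray `x̂ - μ y` (if `r = 0`) is feasible and violates
`x* ≤ α`. Since `x* ≠ 0`, the ratio is continuous at `(x*, α)`, and on the cone it never exceeds
its supremum over `C(p)`; hence no closure of `C(p)` is needed.
-/

section Epigraph

variable {X : Type*} [NormedAddCommGroup X] {g : X → EReal}

def epi (g : X → EReal) : Set (X × ℝ) := {q | g q.1 ≤ q.2}

lemma isClosed_epi (hg : LowerSemicontinuous g) : IsClosed (epi g) :=
  hg.isClosed_epigraph.preimage
    (continuous_fst.prodMk (continuous_coe_real_ereal.comp continuous_snd))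

variable [NormedSpace ℝ X]

lemma convex_epi (hg : ErealConvexOn g) : Convex ℝ (epi g) := by
  rintro ⟨z₁, t₁⟩ (h₁ : g z₁ ≤ t₁) ⟨z₂, t₂⟩ (h₂ : g z₂ ≤ t₂) a b ha hb hab
  calc g (a • z₁ + b • z₂) ≤ a * g z₁ + b * g z₂ := hg z₁ z₂ a b ha hb hab
    _ ≤ a * t₁ + b * t₂ := add_le_add (mul_le_mul_of_nonneg_left h₁ (by exact_mod_cast ha))
        (mul_le_mul_of_nonneg_left h₂ (by exact_mod_cast hb))
    _ = ((a * t₁ + b * t₂ : ℝ) : EReal) := by norm_cast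

lemma conj_le_coe_iff {u : X →L[ℝ] ℝ} {β : ℝ} :
    conj g u ≤ β ↔ ∀ z (t : ℝ), g z ≤ t → u z - t ≤ β := by
  refine ⟨fun h z t hzt => ?_, fun h => iSup_le fun z => ?_⟩
  · have : (u z : EReal) - t ≤ conj g u :=
      (EReal.sub_le_sub le_rfl hzt).trans (le_iSup (fun z => (u z : EReal) - g z) z)
    exact_mod_cast this.trans h
  · cases hz : g z using EReal.rec with
    | bot => exact absurd (h z (u z - β - 1) (by simp [hz])) (by linarith)
    | coe s => exact_mod_cast h z s hz.le
    | top => simp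

lemma conj_ne_bot (hg : ∃ z, g z ≠ ⊤) (u : X →L[ℝ] ℝ) : conj g u ≠ ⊥ := by
  obtain ⟨z, hz⟩ := hg
  refine ne_bot_of_le_ne_bot ?_ (le_iSup (fun z => (u z : EReal) - g z) z)
  cases hgz : g z using EReal.rec with
  | bot => simp
  | coe s => exact_mod_cast EReal.coe_ne_bot (u z - s)
  | top => exact absurd hgz hz

lemma conj_sub_coe (g : X → EReal) (c : ℝ) (u : X →L[ℝ] ℝ) :
    conj (fun z => g z - c) u = conj g u + c := by
  have hc : (c : EReal) ≠ ⊥ ∧ (c : EReal) ≠ ⊤ := ⟨EReal.coe_ne_bot c, EReal.coe_ne_top c⟩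
  have key : ∀ z, (u z : EReal) - (g z - c) = (u z - g z) + c := fun z => by
    cases g z using EReal.rec with
    | bot => simp
    | coe s => norm_cast; ring
    | top => simp
  simp only [conj, key]
  refine le_antisymm
    (iSup_le fun z => add_le_add_left (le_iSup (fun z => (u z : EReal) - g z) z) _) ?_
  rw [← EReal.le_sub_iff_add_le (Or.inl hc.1) (Or.inl hc.2)]
  exact iSup_le fun z => (EReal.le_sub_iff_add_le (Or.inl hc.1) (Or.inl hc.2)).2
    (le_iSup (fun z => (u z : EReal) - g z + c) z)

end Epigraph

lemma ContinuousLinearMap.apply_prod_real {E : Type*} [NormedAddCommGroup E] [NormedSpace ℝ E]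
    (φ : E × ℝ →L[ℝ] ℝ) (z : E) (t : ℝ) :
    φ (z, t) = φ.comp (.inl ℝ E ℝ) z + t * φ (0, 1) := by
  conv_lhs => rw [show (z, t) = (z, 0) + t • ((0 : E), (1 : ℝ)) by simp]
  rw [map_add, map_smul, smul_eq_mul, mul_comm]
  rfl

section FenchelMoreau

variable {X : Type*} [NormedAddCommGroup X] [NormedSpace ℝ X] {g : X → EReal}

/-- A hyperplane separating `(w, a)` from `epi g` is either non-vertical, giving an affine minorant
of `g` that exceeds `a` at `w`, or vertical. -/
theorem exists_conj_le_or_forall_lt (hg : ErealProper g) (hlsc : LowerSemicontinuous g)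
    (hconv : ErealConvexOn g) {w : X} {a : ℝ} (h : (a : EReal) < g w) :
    (∃ (u : X →L[ℝ] ℝ) (β : ℝ), conj g u ≤ β ∧ β < u w - a) ∨
      ∃ (ψ : X →L[ℝ] ℝ) (β : ℝ), (∀ z (t : ℝ), g z ≤ t → ψ z < β) ∧ β < ψ w := by
  obtain ⟨φ, s, hφ, hs⟩ := geometric_hahn_banach_closed_point (convex_epi hconv)
    (isClosed_epi hlsc) (show (w, a) ∉ epi g from h.not_ge)
  rw [φ.apply_prod_real] at hs
  set ψ := φ.comp (.inl ℝ X ℝ)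
  set r := φ (0, 1)
  have hsep : ∀ z (t : ℝ), g z ≤ t → ψ z + t * r < s := fun z t hzt => by
    rw [← φ.apply_prod_real]; exact hφ (z, t) hzt
  have hr : r ≤ 0 := by
    obtain ⟨z₀, hz₀⟩ := hg.2
    by_contra! hr
    set t := max (g z₀).toReal ((s - ψ z₀) / r)
    have h₁ := hsep z₀ t ((EReal.le_coe_toReal hz₀).trans (EReal.coe_le_coe (le_max_left _ _)))
    have h₂ := (div_le_iff₀ hr).1 (le_max_right (g z₀).toReal ((s - ψ z₀) / r))
    linarith
  rcases hr.lt_or_eq with hr | hr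
  · left
    have hr' : 0 < -r := neg_pos.2 hr
    refine ⟨(-r)⁻¹ • ψ, s / -r, conj_le_coe_iff.2 fun z t hzt => ?_, ?_⟩
    · have := hsep z t hzt
      rw [smul_apply, smul_eq_mul, ← div_eq_inv_mul, div_sub' hr'.ne',
        div_le_div_iff_of_pos_right hr']
      linarith
    · rw [smul_apply, smul_eq_mul, ← div_eq_inv_mul, div_sub' hr'.ne',
        div_lt_div_iff_of_pos_right hr']
      linarith
  · right
    refine ⟨ψ, s, fun z t hzt => ?_, by rwa [hr, mul_zero, add_zero] at hs⟩
    have := hsep z t hzt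
    rwa [hr, mul_zero, add_zero] at this

theorem exists_conj_le (hg : ErealProper g) (hlsc : LowerSemicontinuous g)
    (hconv : ErealConvexOn g) : ∃ (u : X →L[ℝ] ℝ) (β : ℝ), conj g u ≤ β := by
  obtain ⟨z₀, hz₀⟩ := hg.2
  set m := (g z₀).toReal
  have hgz₀ : g z₀ = m := (EReal.coe_toReal hz₀ (hg.1 z₀)).symm
  have hlt : ((m - 1 : ℝ) : EReal) < g z₀ := by
    rw [hgz₀, EReal.coe_lt_coe_iff]; linarith
  rcases exists_conj_le_or_forall_lt hg hlsc hconv hlt with ⟨u, β, hu, -⟩ | ⟨ψ, β, hψ, hβ⟩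
  · exact ⟨u, β, hu⟩
  · exact absurd (hψ z₀ _ hgz₀.le) hβ.not_gt

/-- The inequality `g ≤ g**`. In the vertical case, tilting an affine minorant by large multiples
of the vertical separator contradicts the hypothesis. -/
theorem le_of_forall_conj_le (hg : ErealProper g) (hlsc : LowerSemicontinuous g)
    (hconv : ErealConvexOn g) {w : X} {a : ℝ}
    (h : ∀ (u : X →L[ℝ] ℝ) (β : ℝ), conj g u ≤ β → u w - a ≤ β) : g w ≤ a := by
  by_contra! hlt
  rcases exists_conj_le_or_forall_lt hg hlsc hconv hlt with ⟨u, β, hu, hβ⟩ | ⟨ψ, β, hψ, hβ⟩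
  · linarith [h u β hu]
  obtain ⟨u₀, β₀, hu₀⟩ := exists_conj_le hg hlsc hconv
  have htilt : ∀ σ : ℝ, 0 ≤ σ → u₀ w + σ * ψ w - a ≤ β₀ + σ * β := fun σ hσ => by
    have hle : conj g (u₀ + σ • ψ) ≤ (β₀ + σ * β : ℝ) := conj_le_coe_iff.2 fun z t hzt => by
      have h₀ := conj_le_coe_iff.1 hu₀ z t hzt
      have h₁ := mul_le_mul_of_nonneg_left (hψ z t hzt).le hσ
      simp only [add_apply, smul_apply, smul_eq_mul]
      linarith
    simpa [add_sub_right_comm] using h _ _ hle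
  set σ := max 0 ((β₀ + a - u₀ w + 1) / (ψ w - β))
  have hσ := (div_le_iff₀ (sub_pos.2 hβ)).1 (le_max_right 0 ((β₀ + a - u₀ w + 1) / (ψ w - β)))
  have := htilt σ (le_max_left _ _)
  nlinarith

end FenchelMoreau

section DistanceToConvexSet

variable {X : Type*} [NormedAddCommGroup X] [NormedSpace ℝ X]

lemma ofReal_max_div_norm_le_infEDist {K : Set X} {u : X →L[ℝ] ℝ} {α : ℝ}
    (h : ∀ y ∈ K, u y ≤ α) (x : X) :
    ENNReal.ofReal (max (u x - α) 0 / ‖u‖) ≤ Metric.infEDist x K := by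
  refine Metric.le_infEDist.2 fun y hy => ?_
  rw [edist_dist]
  refine ENNReal.ofReal_le_ofReal
    (div_le_of_le_mul₀ (norm_nonneg _) dist_nonneg (max_le ?_ (by positivity)))
  calc u x - α ≤ u (x - y) := by rw [map_sub]; linarith [h y hy]
    _ ≤ ‖u‖ * ‖x - y‖ := (le_abs_self _).trans (u.le_opNorm _)
    _ = dist x y * ‖u‖ := by rw [dist_eq_norm, mul_comm]

lemma ContinuousLinearMap.add_mul_norm_le_of_forall_mem_ball_lt {f : X →L[ℝ] ℝ} {x : X}
    {d u : ℝ} (hd : 0 < d) (h : ∀ a ∈ Metric.ball x d, f a < u) : f x + d * ‖f‖ ≤ u := by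
  suffices ‖f‖ ≤ (u - f x) / d by rw [le_div_iff₀ hd] at this; linarith
  refine le_of_forall_lt_imp_le_of_dense fun r hr => ?_
  obtain ⟨v, hv, hrv⟩ := f.exists_lt_apply_of_lt_opNorm hr
  have hdv : ‖d • v‖ < d := by
    rw [norm_smul, Real.norm_of_nonneg hd.le]; exact mul_lt_of_lt_one_right hd hv
  have h₁ := h (x + d • v) (by rwa [Metric.mem_ball, dist_eq_norm, add_sub_cancel_left])
  have h₂ := h (x - d • v) (by rwa [Metric.mem_ball, dist_eq_norm, sub_sub_cancel_left, norm_neg])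
  rw [map_add, map_smul, smul_eq_mul] at h₁
  rw [map_sub, map_smul, smul_eq_mul] at h₂
  rw [Real.norm_eq_abs] at hrv
  rw [le_div_iff₀ hd]
  cases abs_cases (f v) <;> nlinarith

theorem exists_separating_dual_of_le_infEDist {K : Set X} (hK : Convex ℝ K) (hne : K.Nonempty)
    {x : X} {d : ℝ} (hd : 0 < d) (h : ENNReal.ofReal d ≤ Metric.infEDist x K) :
    ∃ (xs : X →L[ℝ] ℝ) (c : ℝ), xs ≠ 0 ∧ (∀ y ∈ K, xs y ≤ c) ∧ d ≤ (xs x - c) / ‖xs‖ := by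
  have hdisj : Disjoint (Metric.ball x d) K := Set.disjoint_left.2 fun y hy hyK =>
    (h.trans (Metric.infEDist_le_edist_of_mem hyK)).not_gt
      (edist_lt_ofReal.2 (by rwa [dist_comm, ← Metric.mem_ball]))
  obtain ⟨f, u, hf, hu⟩ :=
    geometric_hahn_banach_open (convex_ball x d) Metric.isOpen_ball hK hdisj
  obtain ⟨y, hy⟩ := hne
  have hf₀ : f ≠ 0 := by
    rintro rfl
    have h₁ := hf x (Metric.mem_ball_self hd)
    have h₂ := hu y hy
    simp only [zero_apply] at h₁ h₂
    linarith
  refine ⟨-f, -u, neg_ne_zero.2 hf₀, fun y hy => by simpa using hu y hy, ?_⟩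
  rw [norm_neg, le_div_iff₀ (norm_pos_iff.2 hf₀)]
  have := f.add_mul_norm_le_of_forall_mem_ball_lt hd hf
  simp only [neg_apply]
  linarith

lemma ofReal_div_norm_le_of_mem_closure {S : Set ((X →L[ℝ] ℝ) × ℝ)} {M : ℝ≥0∞} (x : X)
    (h : ∀ q ∈ S, ENNReal.ofReal ((q.1 x - q.2) / ‖q.1‖) ≤ M) {q₀ : (X →L[ℝ] ℝ) × ℝ}
    (hq₀ : q₀ ∈ closure S) (hne : q₀.1 ≠ 0) :
    ENNReal.ofReal ((q₀.1 x - q₀.2) / ‖q₀.1‖) ≤ M := by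
  have hcont :
      ContinuousAt (fun q : (X →L[ℝ] ℝ) × ℝ => ENNReal.ofReal ((q.1 x - q.2) / ‖q.1‖)) q₀ :=
    ENNReal.continuous_ofReal.continuousAt.comp <| by
      fun_prop (disch := exact norm_ne_zero_iff.2 hne)
  exact ((isClosed_Iic (a := M)).closure_subset_iff).2 (Set.image_subset_iff.2 h)
    (mem_closure_image hcont hq₀)

end DistanceToConvexSet

section EpiCone

variable {E : Type*} [AddCommGroup E] [Module ℝ E] {C : Set (E × ℝ)}

def epiCone (C : Set (E × ℝ)) : Set (E × ℝ) :=
  {q | ∃ r : ℝ, 0 ≤ r ∧ ∃ c ∈ C, q.1 = r • c.1 ∧ r * c.2 ≤ q.2}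

lemma mem_epiCone_of_mem {c : E × ℝ} (hc : c ∈ C) {s : ℝ} (hs : c.2 ≤ s) :
    (c.1, s) ∈ epiCone C :=
  ⟨1, zero_le_one, c, hc, (one_smul ℝ c.1).symm, by rwa [one_mul]⟩

lemma zero_mk_mem_epiCone (hC : C.Nonempty) {s : ℝ} (hs : 0 ≤ s) : ((0 : E), s) ∈ epiCone C :=
  let ⟨c, hc⟩ := hC
  ⟨0, le_rfl, c, hc, (zero_smul ℝ c.1).symm, by rwa [zero_mul]⟩

lemma smul_mem_epiCone {a : ℝ} (ha : 0 ≤ a) {q : E × ℝ} (hq : q ∈ epiCone C) :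
    a • q ∈ epiCone C := by
  obtain ⟨r, hr, c, hc, h₁, h₂⟩ := hq
  refine ⟨a * r, mul_nonneg ha hr, c, hc, by simp [h₁, smul_smul], ?_⟩
  simpa [mul_assoc] using mul_le_mul_of_nonneg_left h₂ ha

lemma add_mem_epiCone (hC : Convex ℝ C) {q₁ q₂ : E × ℝ} (h₁ : q₁ ∈ epiCone C)
    (h₂ : q₂ ∈ epiCone C) : q₁ + q₂ ∈ epiCone C := by
  obtain ⟨r₁, hr₁, c₁, hc₁, hq₁, hq₁'⟩ := h₁
  obtain ⟨r₂, hr₂, c₂, hc₂, hq₂, hq₂'⟩ := h₂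
  rcases (add_nonneg hr₁ hr₂).eq_or_lt with hR | hR
  · obtain ⟨rfl, rfl⟩ : r₁ = 0 ∧ r₂ = 0 := ⟨by linarith, by linarith⟩
    refine ⟨0, le_rfl, c₁, hc₁, by simp [hq₁, hq₂], ?_⟩
    simp only [zero_mul] at hq₁' hq₂' ⊢
    exact add_nonneg hq₁' hq₂'
  refine ⟨r₁ + r₂, hR.le, (r₁ / (r₁ + r₂)) • c₁ + (r₂ / (r₁ + r₂)) • c₂,
    hC hc₁ hc₂ (by positivity) (by positivity) (by field_simp), ?_, ?_⟩
  · simp only [Prod.fst_add, Prod.smul_fst, smul_add, smul_smul, hq₁, hq₂]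
    congr 2 <;> field_simp
  · simp only [Prod.snd_add, Prod.smul_snd, smul_eq_mul]
    have : (r₁ + r₂) * (r₁ / (r₁ + r₂) * c₁.2 + r₂ / (r₁ + r₂) * c₂.2) =
        r₁ * c₁.2 + r₂ * c₂.2 := by
      field_simp
    linarith

variable {X : Type*} [NormedAddCommGroup X] [NormedSpace ℝ X]

lemma ofReal_div_norm_le_of_mem_epiCone {C : Set ((X →L[ℝ] ℝ) × ℝ)} {q : (X →L[ℝ] ℝ) × ℝ}
    (hq : q ∈ epiCone C) (x : X) :
    ENNReal.ofReal ((q.1 x - q.2) / ‖q.1‖) ≤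
      ⨆ c ∈ C, ENNReal.ofReal (max (c.1 x - c.2) 0 / ‖c.1‖) := by
  obtain ⟨r, hr, c, hc, hq₁, hq₂⟩ := hq
  rcases hr.eq_or_lt with rfl | hr
  · simp [hq₁]
  calc ENNReal.ofReal ((q.1 x - q.2) / ‖q.1‖)
      ≤ ENNReal.ofReal (max (c.1 x - c.2) 0 / ‖c.1‖) := by
        refine ENNReal.ofReal_le_ofReal ?_
        rw [hq₁, norm_smul, Real.norm_of_nonneg hr.le, smul_apply, smul_eq_mul,
          ← mul_div_mul_left (max _ 0) _ hr.ne']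
        refine div_le_div_of_nonneg_right ?_ (by positivity)
        nlinarith [le_max_left (c.1 x - c.2) 0]
    _ ≤ _ :=
      le_iSup₂ (f := fun c (_ : c ∈ C) => ENNReal.ofReal (max (c.1 x - c.2) 0 / ‖c.1‖)) c hc

end EpiCone

section ConvexSystem

variable {T : Type*} {X : Type*} {f : T → X → EReal} {p : Linf T}

lemma SSC.feas_nonempty (h : SSC f p) : (feas f p).Nonempty := by
  obtain ⟨x₀, hx₀⟩ := h
  exact ⟨x₀, fun t => EReal.sub_nonpos.1
    ((le_iSup (fun t => f t x₀ - (p t : ℝ)) t).trans hx₀.le)⟩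

variable [NormedAddCommGroup X] [NormedSpace ℝ X]

lemma convex_feas (hconv : ∀ t, ErealConvexOn (f t)) : Convex ℝ (feas f p) :=
  fun y₁ h₁ y₂ h₂ a b ha hb hab t => by
    have := convex_epi (hconv t) (show (y₁, p t) ∈ epi (f t) from h₁ t)
      (show (y₂, p t) ∈ epi (f t) from h₂ t) ha hb hab
    simpa [epi, ← add_mul, hab] using this

lemma Cset_le_of_mem_feas {q : (X →L[ℝ] ℝ) × ℝ} (hq : q ∈ Cset f p) {y : X}
    (hy : y ∈ feas f p) : q.1 y ≤ q.2 := by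
  refine convexHull_min (t := {q : (X →L[ℝ] ℝ) × ℝ | q.1 y ≤ q.2}) ?_ ?_ hq
  · rintro q ⟨-, ⟨t, rfl⟩, hq : conj _ q.1 = q.2⟩
    simpa using conj_le_coe_iff.1 hq.le y 0 (EReal.sub_nonpos.2 (hy t))
  · intro q₁ h₁ q₂ h₂ a b ha hb _
    simp only [Set.mem_ofPred_eq, Prod.fst_add, Prod.smul_fst, add_apply, smul_apply,
      smul_eq_mul, Prod.snd_add, Prod.smul_snd] at h₁ h₂ ⊢
    exact add_le_add (mul_le_mul_of_nonneg_left h₁ ha) (mul_le_mul_of_nonneg_left h₂ hb)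

lemma exists_mem_Cset_of_conj_le (hproper : ∀ t, ErealProper (f t)) {t : T}
    {u : X →L[ℝ] ℝ} {β : ℝ} (h : conj (f t) u ≤ β) :
    ∃ β₀ ≤ β, (u, β₀ + p t) ∈ Cset f p := by
  obtain ⟨β₀, hβ₀⟩ : ∃ β₀ : ℝ, conj (f t) u = β₀ :=
    ⟨_, (EReal.coe_toReal (ne_top_of_le_ne_top (EReal.coe_ne_top β) h)
      (conj_ne_bot (hproper t).2 u)).symm⟩
  refine ⟨β₀, by exact_mod_cast hβ₀ ▸ h, subset_convexHull ℝ _ (Set.mem_iUnion.2 ⟨t, ?_⟩)⟩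
  change conj (fun x => f t x - (p t : ℝ)) u = ((β₀ + p t : ℝ) : EReal)
  rw [conj_sub_coe, hβ₀, EReal.coe_add]

lemma Cset_nonempty [Nonempty T] (hproper : ∀ t, ErealProper (f t))
    (hlsc : ∀ t, LowerSemicontinuous (f t)) (hconv : ∀ t, ErealConvexOn (f t)) :
    (Cset f p).Nonempty := by
  obtain ⟨t⟩ : Nonempty T := inferInstance
  obtain ⟨u, β, h⟩ := exists_conj_le (hproper t) (hlsc t) (hconv t)
  obtain ⟨β₀, -, hmem⟩ := exists_mem_Cset_of_conj_le (p := p) hproper h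
  exact ⟨_, hmem⟩

lemma mem_feas_of_forall_conj_le (hproper : ∀ t, ErealProper (f t))
    (hlsc : ∀ t, LowerSemicontinuous (f t)) (hconv : ∀ t, ErealConvexOn (f t)) {y : X}
    (h : ∀ t (u : X →L[ℝ] ℝ) (β : ℝ), conj (f t) u ≤ β → u y - p t ≤ β) : y ∈ feas f p :=
  fun t => le_of_forall_conj_le (hproper t) (hlsc t) (hconv t) (h t)

lemma exists_dual_certificate_of_notMem_closure [Nonempty T]
    (hproper : ∀ t, ErealProper (f t)) (hlsc : ∀ t, LowerSemicontinuous (f t))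
    (hconv : ∀ t, ErealConvexOn (f t))
    (hrefl : Function.Surjective (NormedSpace.inclusionInDoubleDual ℝ X))
    {q : (X →L[ℝ] ℝ) × ℝ} (hq : q ∉ closure (epiCone (Cset f p))) :
    ∃ (y : X) (r : ℝ), 0 ≤ r ∧ q.1 y + q.2 * r < 0 ∧
      ∀ t u (β : ℝ), conj (f t) u ≤ β → 0 ≤ u y + (β + p t) * r := by
  have hC := Cset_nonempty (p := p) hproper hlsc hconv
  let K : PointedCone ℝ ((X →L[ℝ] ℝ) × ℝ) :=
    { carrier := epiCone (Cset f p)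
      add_mem' := add_mem_epiCone (convex_convexHull ℝ _)
      zero_mem' := zero_mk_mem_epiCone hC le_rfl
      smul_mem' := fun a _ hq => smul_mem_epiCone a.2 hq }
  obtain ⟨φ, hφK, hφ⟩ := ProperCone.hyperplane_separation_point (Submodule.closure K) hq
  obtain ⟨y, hy⟩ := hrefl (φ.comp (.inl ℝ _ ℝ))
  have hφy : ∀ u γ, φ (u, γ) = u y + γ * φ (0, 1) := fun u γ => by
    rw [φ.apply_prod_real, ← hy, NormedSpace.dual_def]
  have hK : ∀ q ∈ epiCone (Cset f p), 0 ≤ φ q := fun q hq => hφK q (subset_closure hq)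
  refine ⟨y, φ (0, 1), hK _ (zero_mk_mem_epiCone hC zero_le_one),
    by rwa [← hφy], fun t u β hβ => ?_⟩
  obtain ⟨β₀, hβ₀, hmem⟩ := exists_mem_Cset_of_conj_le hproper hβ
  rw [← hφy]
  exact hK _ (mem_epiCone_of_mem hmem (by simpa using hβ₀))

theorem mem_closure_epiCone_Cset [Nonempty T] (hproper : ∀ t, ErealProper (f t))
    (hlsc : ∀ t, LowerSemicontinuous (f t)) (hconv : ∀ t, ErealConvexOn (f t))
    (hrefl : Function.Surjective (NormedSpace.inclusionInDoubleDual ℝ X))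
    (hF : (feas f p).Nonempty) {xs : X →L[ℝ] ℝ} {c : ℝ} (h : ∀ y ∈ feas f p, xs y ≤ c) :
    (xs, c) ∈ closure (epiCone (Cset f p)) := by
  by_contra hnot
  obtain ⟨y, r, hr, hxs, hdom⟩ :=
    exists_dual_certificate_of_notMem_closure hproper hlsc hconv hrefl hnot
  rcases hr.eq_or_lt with rfl | hr
  · -- `y` is a direction of recession of `feas f p` along which `xs` is unbounded above
    simp only [mul_zero, add_zero] at hxs hdom
    obtain ⟨x₀, hx₀⟩ := hF
    have hray : ∀ μ : ℝ, 0 ≤ μ → x₀ - μ • y ∈ feas f p := fun μ hμ =>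
      mem_feas_of_forall_conj_le hproper hlsc hconv fun t u β hβ => by
        have := conj_le_coe_iff.1 hβ x₀ (p t) (hx₀ t)
        rw [map_sub, map_smul, smul_eq_mul]
        nlinarith [hdom t u β hβ]
    set μ := (c - xs x₀ + 1) / -xs y
    have hμy : μ * xs y = -(c - xs x₀ + 1) := by
      rw [div_mul_eq_mul_div, div_neg, mul_div_cancel_right₀ _ hxs.ne]
    have := h _ (hray μ (div_nonneg (by linarith [h x₀ hx₀]) (by linarith)))
    rw [map_sub, map_smul, smul_eq_mul] at this
    linarith
  · -- `-y / r` is feasible but violates `xs ≤ c`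
    have hy : (-r⁻¹) • y ∈ feas f p :=
      mem_feas_of_forall_conj_le hproper hlsc hconv fun t u β hβ => by
        have := hdom t u β hβ
        rw [map_smul, smul_eq_mul, neg_mul, ← div_eq_inv_mul, ← neg_div, sub_le_iff_le_add,
          div_le_iff₀ hr]
        linarith
    have := h _ hy
    rw [map_smul, smul_eq_mul, neg_mul, ← div_eq_inv_mul, ← neg_div, div_le_iff₀ hr] at this
    linarith

end ConvexSystem

theorem stmt_14_general {T : Type*} [Nonempty T]
    {X : Type*} [NormedAddCommGroup X] [NormedSpace ℝ X]
    (f : T → X → EReal)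
    (hproper : ∀ t, ErealProper (f t))
    (hlsc : ∀ t, LowerSemicontinuous (f t))
    (hconv : ∀ t, ErealConvexOn (f t))
    (hrefl : Function.Surjective (NormedSpace.inclusionInDoubleDual ℝ X))
    (p : Linf T) (hssc : SSC f p) (x : X) :
    EMetric.infEdist x (feas f p) =
      ⨆ q ∈ Cset f p, ENNReal.ofReal (max (q.1 x - q.2) 0 / ‖q.1‖) := by
  refine le_antisymm (le_of_forall_lt_imp_le_of_dense fun e he => ?_) <| iSup₂_le fun q hq =>
    ofReal_max_div_norm_le_infEDist (fun y hy => Cset_le_of_mem_feas hq hy) x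
  rcases eq_or_ne e 0 with rfl | he₀
  · exact zero_le
  obtain ⟨d, rfl⟩ : ∃ d : ℝ, e = ENNReal.ofReal d :=
    ⟨_, (ENNReal.ofReal_toReal he.ne_top).symm⟩
  have hd : 0 < d := ENNReal.ofReal_pos.1 (pos_iff_ne_zero.2 he₀)
  obtain ⟨xs, c, hxs, hsep, hdc⟩ :=
    exists_separating_dual_of_le_infEDist (convex_feas hconv) hssc.feas_nonempty hd he.le
  calc ENNReal.ofReal d ≤ ENNReal.ofReal ((xs x - c) / ‖xs‖) := ENNReal.ofReal_le_ofReal hdc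
    _ ≤ _ := ofReal_div_norm_le_of_mem_closure x
      (fun q hq => ofReal_div_norm_le_of_mem_epiCone hq x)
      (mem_closure_epiCone_Cset hproper hlsc hconv hrefl hssc.feas_nonempty hsep) hxs

theorem stmt_14 {T : Type*} [Nonempty T]
    {X : Type*} [NormedAddCommGroup X] [NormedSpace ℝ X] [CompleteSpace X]
    (f : T → X → EReal)
    (hproper : ∀ t, ErealProper (f t))
    (hlsc : ∀ t, LowerSemicontinuous (f t))
    (hconv : ∀ t, ErealConvexOn (f t))
    (hrefl : Function.Surjective (NormedSpace.inclusionInDoubleDual ℝ X))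
    (p : Linf T) (hssc : SSC f p) (x : X) :
    EMetric.infEdist x (feas f p) =
      ⨆ q ∈ Cset f p, ENNReal.ofReal (max (q.1 x - q.2) 0 / ‖q.1‖) :=
  stmt_14_general f hproper hlsc hconv hrefl p hssc x
end
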